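/- Let 0 < s < 1, let Ω ⊆ ℝ^N be an open bounded set, and let {u_n} ⊆ C(Ω̄) with u_n ∈ W^{s,p_n}(Ω) for an increasing sequence p_n → ∞, such that liminf_n [u_n]_{W^{s,p_n}(Ω)} < +∞. If u_n converges pointwise on Ω̄ to a continuous function u, then u ∈ C^{0,s}(Ω̄) and [u]_{C^{0,s}(Ω̄)} ≤ liminf_n [u_n]_{W^{s,p_n}(Ω)}. -/

import Mathlib

open MeasureTheory ENNReal Filter Metric Set

noncomputable section

abbrev Euc (N : ℕ) := EuclideanSpace ℝ (Fin N)

/-- Homogeneous Hölder seminorm `[u]_{C^{0,α}(Ω)}`, `ℝ≥0∞`-valued. -/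
noncomputable def holderSemi {N : ℕ} (Ω : Set (Euc N)) (α : ℝ) (u : Euc N → ℝ) : ℝ≥0∞ :=
  ⨆ (x : Ω) (y : Ω) (_ : x.1 ≠ y.1),
    ENNReal.ofReal (|u x.1 - u y.1| / ‖x.1 - y.1‖ ^ α)

/-- `p`-th power of the Gagliardo seminorm `[u]_{W^{s,p}(Ω)}^p`. -/
noncomputable def gagliardoP {N : ℕ} (Ω : Set (Euc N)) (s p : ℝ) (u : Euc N → ℝ) : ℝ≥0∞ :=
  ∫⁻ x in Ω, ∫⁻ y in Ω,
    ENNReal.ofReal (|u x - u y| ^ p / ‖x - y‖ ^ ((N : ℝ) + s * p))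

/-- Gagliardo seminorm `[u]_{W^{s,p}(Ω)}`. -/
noncomputable def gagliardoSemi {N : ℕ} (Ω : Set (Euc N)) (s p : ℝ) (u : Euc N → ℝ) : ℝ≥0∞ :=
  gagliardoP Ω s p u ^ (1 / p)

/-!
Writing `‖x - y‖ ^ (N + s p) = ‖x - y‖ ^ N (‖x - y‖ ^ s) ^ p`, the Gagliardo integrand of `uₙ` is at
least `t ^ p / R ^ N` wherever the Hölder quotient of `uₙ` exceeds `t` and `‖x - y‖ ≤ R`. If the
quotient of `u` at an interior pair `(x₀, y₀)` exceeds `t`, it does so on a ball around that pair;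
by pointwise convergence and Fatou's lemma, the part of the ball where the quotient of `uₙ` exceeds
`t` eventually has measure at least some `w > 0`. Hence `[uₙ]_{W^{s,pₙ}} ≥ t (w / R ^ N) ^ (1 / pₙ)`,
which tends to `t`. Pairs on the boundary follow by continuity of `u` on the closure.
-/

open Topology

theorem ENNReal.ofReal_le_of_forall_pos_lt {a : ℝ} {b : ℝ≥0∞}
    (h : ∀ t : ℝ, 0 < t → t < a → ENNReal.ofReal t ≤ b) : ENNReal.ofReal a ≤ b := by
  refine ENNReal.le_of_forall_nnreal_lt fun r hr => ?_
  rcases eq_or_lt_of_le r.2 with hr0 | hr0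
  · simp [NNReal.coe_eq_zero.mp hr0.symm]
  · rw [← ENNReal.ofReal_coe_nnreal] at hr ⊢
    exact h r hr0 ((ENNReal.ofReal_lt_ofReal_iff_of_nonneg r.2).mp hr)

theorem MeasureTheory.measure_le_liminf_of_forall_eventually_mem {α : Type*} [MeasurableSpace α]
    (μ : Measure α) {S : Set α} {E : ℕ → Set α} (hE : ∀ n, MeasurableSet (E n))
    (hS : ∀ z ∈ S, ∀ᶠ n in atTop, z ∈ E n) :
    μ S ≤ liminf (fun n => μ (E n)) atTop := by
  have hmeas (n : ℕ) : Measurable ((E n).indicator (1 : α → ℝ≥0∞)) :=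
    measurable_one.indicator (hE n)
  calc μ S ≤ μ {z | 1 ≤ liminf (fun n => (E n).indicator (1 : α → ℝ≥0∞) z) atTop} := by
        refine measure_mono fun z hz => ?_
        rw [mem_ofPred_eq]
        refine le_liminf_of_le (by isBoundedDefault) ?_
        filter_upwards [hS z hz] with n hn
        simp [hn]
    _ ≤ ∫⁻ z, liminf (fun n => (E n).indicator 1 z) atTop ∂μ := by
        simpa using mul_meas_ge_le_lintegral₀
          (Measurable.liminf hmeas).aemeasurable 1
    _ ≤ liminf (fun n => ∫⁻ z, (E n).indicator 1 z ∂μ) atTop := lintegral_liminf_le hmeas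
    _ = liminf (fun n => μ (E n)) atTop := by
        simp only [lintegral_indicator_one (hE _)]

def holderQuotient {N : ℕ} (f : Euc N → ℝ) (α : ℝ) (z : Euc N × Euc N) : ℝ :=
  |f z.1 - f z.2| / ‖z.1 - z.2‖ ^ α

theorem continuousOn_holderQuotient {N : ℕ} {f : Euc N → ℝ} {S : Set (Euc N)}
    (hf : ContinuousOn f S) (α : ℝ) :
    ContinuousOn (holderQuotient f α) (S ×ˢ S ∩ {z | z.1 ≠ z.2}) := by
  refine ContinuousOn.div ?_ ?_ fun z hz => ?_
  · exact ((hf.comp continuousOn_fst fun z hz => hz.1.1).sub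
      (hf.comp continuousOn_snd fun z hz => hz.1.2)).abs
  · exact (continuous_fst.sub continuous_snd).norm.continuousOn.rpow_const fun z hz =>
      Or.inl (norm_ne_zero_iff.mpr (sub_ne_zero.mpr hz.2))
  · exact (Real.rpow_pos_of_pos (norm_pos_iff.mpr (sub_ne_zero.mpr hz.2)) α).ne'

theorem holderSemi_closure_le {N : ℕ} {Ω : Set (Euc N)} {α : ℝ} {u : Euc N → ℝ}
    (hu : ContinuousOn u (closure Ω)) : holderSemi (closure Ω) α u ≤ holderSemi Ω α u := by
  set offDiag : Set (Euc N × Euc N) := {z | z.1 ≠ z.2}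
  have hoffDiag : IsOpen offDiag := isOpen_ne_fun continuous_fst continuous_snd
  refine iSup_le fun ⟨x, hx⟩ => iSup_le fun ⟨y, hy⟩ => iSup_le fun hxy => ?_
  have hmem : (x, y) ∈ closure (Ω ×ˢ Ω ∩ offDiag) := by
    rw [inter_comm]
    exact hoffDiag.inter_closure ⟨hxy, by rw [closure_prod_eq]; exact ⟨hx, hy⟩⟩
  refine ContinuousWithinAt.closure_le (f := fun z => ENNReal.ofReal (holderQuotient u α z))
    hmem ?_ continuousWithinAt_const ?_
  · exact ENNReal.continuous_ofReal.continuousAt.comp_continuousWithinAt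
      ((continuousOn_holderQuotient hu α (x, y) ⟨⟨hx, hy⟩, hxy⟩).mono
        (inter_subset_inter_left _ (prod_mono subset_closure subset_closure)))
  · rintro ⟨x', y'⟩ ⟨⟨hx', hy'⟩, hxy'⟩
    exact le_iSup_of_le ⟨x', hx'⟩ (le_iSup_of_le ⟨y', hy'⟩ (le_iSup_of_le hxy' le_rfl))

theorem rpow_div_pow_le_rpow_div_rpow {a d t p s R : ℝ} (N : ℕ) (hd : 0 < d) (hdR : d ≤ R)
    (ht : 0 ≤ t) (hp : 0 ≤ p) (hta : t ≤ a / d ^ s) :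
    t ^ p / R ^ N ≤ a ^ p / d ^ ((N : ℝ) + s * p) := by
  have hds : 0 < d ^ s := Real.rpow_pos_of_pos hd s
  have ha : 0 ≤ a := (mul_nonneg ht hds.le).trans ((le_div_iff₀ hds).mp hta)
  have hsplit : a ^ p / d ^ ((N : ℝ) + s * p) = (a / d ^ s) ^ p / d ^ N := by
    rw [Real.rpow_add hd, Real.rpow_natCast, Real.rpow_mul hd.le, Real.div_rpow ha hds.le]
    ring
  rw [hsplit]
  exact div_le_div₀ (by positivity) (Real.rpow_le_rpow ht hta hp) (by positivity)
    (pow_le_pow_left₀ hd.le hdR N)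

theorem ofReal_mul_measure_le_gagliardoP {N : ℕ} (Ω : Set (Euc N)) {s p t R : ℝ}
    (f : Euc N → ℝ) {E : Set (Euc N × Euc N)} (hE : MeasurableSet E) (ht : 0 ≤ t) (hp : 0 ≤ p)
    (hbound : ∀ z ∈ E, z.1 ≠ z.2 ∧ ‖z.1 - z.2‖ ≤ R ∧ t ≤ holderQuotient f s z) :
    ENNReal.ofReal (t ^ p / R ^ N) * (volume.restrict Ω).prod (volume.restrict Ω) E ≤
      gagliardoP Ω s p f := by
  calc _ = ∫⁻ x in Ω, ∫⁻ y in Ω, E.indicator (fun _ => ENNReal.ofReal (t ^ p / R ^ N)) (x, y) := by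
        rw [← lintegral_prod _ (measurable_const.indicator hE).aemeasurable,
          lintegral_indicator_const hE]
    _ ≤ gagliardoP Ω s p f := by
        refine lintegral_mono fun x => lintegral_mono fun y => ?_
        by_cases hz : (x, y) ∈ E
        · obtain ⟨hne, hR, hq⟩ := hbound _ hz
          rw [indicator_of_mem hz]
          exact ENNReal.ofReal_le_ofReal (rpow_div_pow_le_rpow_div_rpow N
            (norm_pos_iff.mpr (sub_ne_zero.mpr hne)) hR ht hp hq)
        · simp [indicator_of_notMem hz]

theorem ofReal_mul_rpow_one_div_le {t c p : ℝ} {X : ℝ≥0∞} (ht : 0 ≤ t) (hc : 0 ≤ c) (hp : 0 < p)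
    (h : ENNReal.ofReal (t ^ p * c) ≤ X) : ENNReal.ofReal (t * c ^ (1 / p)) ≤ X ^ (1 / p) := by
  calc ENNReal.ofReal (t * c ^ (1 / p)) = ENNReal.ofReal (t ^ p * c) ^ (1 / p) := by
        rw [ENNReal.ofReal_rpow_of_nonneg (by positivity) (by positivity),
          Real.mul_rpow (by positivity) hc, ← Real.rpow_mul ht, mul_one_div_cancel hp.ne',
          Real.rpow_one]
    _ ≤ X ^ (1 / p) := ENNReal.rpow_le_rpow h (by positivity)

theorem tendsto_rpow_one_div_of_tendsto_atTop {c : ℝ} (hc : 0 < c) {pn : ℕ → ℝ}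
    (hpn : Tendsto pn atTop atTop) : Tendsto (fun n => c ^ (1 / pn n)) atTop (𝓝 1) := by
  have h := (Real.continuousAt_const_rpow hc.ne').tendsto.comp
    (tendsto_const_nhds.div_atTop hpn : Tendsto (fun n => 1 / pn n) atTop (𝓝 0))
  rwa [Real.rpow_zero] at h

theorem ofReal_le_liminf_gagliardoSemi_of_eventually_le_measure {N : ℕ} {Ω : Set (Euc N)}
    {s t R w : ℝ} {un : ℕ → Euc N → ℝ} {pn : ℕ → ℝ} (hpn : Tendsto pn atTop atTop)
    (ht : 0 < t) (hR : 0 < R) (hw : 0 < w) {E : ℕ → Set (Euc N × Euc N)}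
    (hE : ∀ n, MeasurableSet (E n))
    (hbound : ∀ n, ∀ z ∈ E n, z.1 ≠ z.2 ∧ ‖z.1 - z.2‖ ≤ R ∧ t ≤ holderQuotient (un n) s z)
    (hwE : ∀ᶠ n in atTop, ENNReal.ofReal w ≤ (volume.restrict Ω).prod (volume.restrict Ω) (E n)) :
    ENNReal.ofReal t ≤ liminf (fun n => gagliardoSemi Ω s (pn n) (un n)) atTop := by
  have hlim : Tendsto (fun n => ENNReal.ofReal (t * (w / R ^ N) ^ (1 / pn n))) atTop
      (𝓝 (ENNReal.ofReal t)) := by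
    simpa using ENNReal.tendsto_ofReal
      ((tendsto_rpow_one_div_of_tendsto_atTop (by positivity) hpn).const_mul t)
  rw [← hlim.liminf_eq]
  refine liminf_le_liminf ?_
  filter_upwards [hwE, hpn.eventually_gt_atTop 0] with n hwEn hp
  refine ofReal_mul_rpow_one_div_le ht.le (by positivity) hp ?_
  calc ENNReal.ofReal (t ^ pn n * (w / R ^ N))
      = ENNReal.ofReal (t ^ pn n / R ^ N) * ENNReal.ofReal w := by
        rw [← ENNReal.ofReal_mul (by positivity)]
        ring_nf
    _ ≤ _ := by gcongr
    _ ≤ gagliardoP Ω s (pn n) (un n) :=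
        ofReal_mul_measure_le_gagliardoP Ω _ (hE n) ht.le hp.le (hbound n)

theorem ofReal_le_liminf_gagliardoSemi_of_lt_holderQuotient {N : ℕ} {s : ℝ} {Ω : Set (Euc N)}
    (hΩ : IsOpen Ω) {un : ℕ → Euc N → ℝ} (hcont : ∀ n, ContinuousOn (un n) Ω)
    {pn : ℕ → ℝ} (hpn : Tendsto pn atTop atTop) {u : Euc N → ℝ} (hu : ContinuousOn u Ω)
    (hconv : ∀ x ∈ Ω, Tendsto (fun n => un n x) atTop (𝓝 (u x)))
    {z₀ : Euc N × Euc N} (hz₀ : z₀ ∈ Ω ×ˢ Ω) (hne : z₀.1 ≠ z₀.2) {t : ℝ} (ht : 0 < t)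
    (htz : t < holderQuotient u s z₀) :
    ENNReal.ofReal t ≤ liminf (fun n => gagliardoSemi Ω s (pn n) (un n)) atTop := by
  set ν := (volume.restrict Ω).prod (volume.restrict Ω) with hν
  set D := Ω ×ˢ Ω ∩ {z : Euc N × Euc N | z.1 ≠ z.2}
  have hD : IsOpen D := (hΩ.prod hΩ).inter (isOpen_ne_fun continuous_fst continuous_snd)
  obtain ⟨ε, hε, hball⟩ : ∃ ε > 0, ∀ z ∈ ball z₀ ε, z ∈ D ∧ t < holderQuotient u s z :=
    eventually_nhds_iff_ball.mp ((hD.eventually_mem ⟨hz₀, hne⟩).and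
      (((continuousOn_holderQuotient hu s).continuousAt
        (hD.mem_nhds ⟨hz₀, hne⟩)).eventually_const_lt htz))
  have hR (z) (hz : z ∈ ball z₀ ε) : ‖z.1 - z.2‖ ≤ ‖z₀.1 - z₀.2‖ + 2 * ε := by
    rw [← ball_prod_same, mem_prod, mem_ball, mem_ball] at hz
    have h := dist_triangle4 z.1 z₀.1 z₀.2 z.2
    rw [dist_comm z₀.2] at h
    simp only [dist_eq_norm] at h hz
    linarith [hz.1, hz.2]
  set E : ℕ → Set (Euc N × Euc N) := fun n => ball z₀ ε ∩ holderQuotient (un n) s ⁻¹' Ioi t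
  have hE (n : ℕ) : MeasurableSet (E n) :=
    (((continuousOn_holderQuotient (hcont n) s).mono fun z hz => (hball z hz).1
      ).isOpen_inter_preimage isOpen_ball isOpen_Ioi).measurableSet
  have hνE : ν (ball z₀ ε) ≤ liminf (fun n => ν (E n)) atTop := by
    refine measure_le_liminf_of_forall_eventually_mem ν hE fun z hz => ?_
    obtain ⟨⟨⟨hz₁, hz₂⟩, _⟩, hzt⟩ := hball z hz
    have hlim : Tendsto (fun n => holderQuotient (un n) s z) atTop (𝓝 (holderQuotient u s z)) :=
      ((hconv _ hz₁).sub (hconv _ hz₂)).abs.div_const _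
    filter_upwards [hlim.eventually_const_lt hzt] with n hn using ⟨hz, hn⟩
  have hνpos : 0 < ν (ball z₀ ε) := by
    rw [hν, Measure.prod_restrict, Measure.restrict_apply isOpen_ball.measurableSet,
      inter_eq_left.mpr fun z hz => (hball z hz).1.1]
    exact measure_ball_pos _ _ hε
  obtain ⟨w, -, hw, hwν⟩ := ENNReal.lt_iff_exists_real_btwn.mp hνpos
  exact ofReal_le_liminf_gagliardoSemi_of_eventually_le_measure hpn ht (by positivity)
    (ENNReal.ofReal_pos.mp hw) hE
    (fun n z hz => ⟨(hball z hz.1).1.2, hR z hz.1, le_of_lt hz.2⟩)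
    ((eventually_lt_of_lt_liminf (hwν.trans_le hνE)).mono fun _ h => h.le)

theorem stmt_6_general {N : ℕ} (s : ℝ)
    (Ω : Set (Euc N)) (hΩ : IsOpen Ω)
    (un : ℕ → Euc N → ℝ) (hcont : ∀ n, ContinuousOn (un n) (closure Ω))
    (pn : ℕ → ℝ)
    (hpntop : Tendsto pn atTop atTop)
    (u : Euc N → ℝ) (hu : ContinuousOn u (closure Ω))
    (hconv : ∀ x ∈ closure Ω, Tendsto (fun n => un n x) atTop (nhds (u x))) :
    holderSemi (closure Ω) s u ≤
      Filter.liminf (fun n => gagliardoSemi Ω s (pn n) (un n)) atTop := by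
  refine (holderSemi_closure_le hu).trans <|
    iSup_le fun ⟨x, hx⟩ => iSup_le fun ⟨y, hy⟩ => iSup_le fun hxy => ?_
  refine ENNReal.ofReal_le_of_forall_pos_lt fun t ht htq => ?_
  exact ofReal_le_liminf_gagliardoSemi_of_lt_holderQuotient (z₀ := (x, y)) hΩ
    (fun n => (hcont n).mono subset_closure) hpntop (hu.mono subset_closure)
    (fun x hx => hconv x (subset_closure hx)) ⟨hx, hy⟩ hxy ht htq

/-- Γ-convergence-type lower semicontinuity: pointwise limits of functions with
bounded `W^{s,p_n}` seminorms (with `p_n → ∞`) are `s`-Hölder continuous. -/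
theorem stmt_6 {N : ℕ} (s : ℝ) (hs0 : 0 < s) (hs1 : s < 1)
    (Ω : Set (Euc N)) (hΩ : IsOpen Ω) (hΩbd : Bornology.IsBounded Ω)
    (un : ℕ → Euc N → ℝ) (hcont : ∀ n, ContinuousOn (un n) (closure Ω))
    (pn : ℕ → ℝ) (hpn1 : ∀ n, 1 < pn n) (hpnmono : StrictMono pn)
    (hpntop : Tendsto pn atTop atTop)
    (hfin : ∀ n, gagliardoP Ω s (pn n) (un n) ≠ ⊤)
    (hliminf : Filter.liminf (fun n => gagliardoSemi Ω s (pn n) (un n)) atTop ≠ ⊤)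
    (u : Euc N → ℝ) (hu : ContinuousOn u (closure Ω))
    (hconv : ∀ x ∈ closure Ω, Tendsto (fun n => un n x) atTop (nhds (u x))) :
    holderSemi (closure Ω) s u ≤
      Filter.liminf (fun n => gagliardoSemi Ω s (pn n) (un n)) atTop :=
  stmt_6_general s Ω hΩ un hcont pn hpntop u hu hconv
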